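/- arXiv:2510.06678 — 3 statements merged into one kernel-verified Lean document; each statement's English description precedes it below -/
import Mathlib

section
/- Let Γ(x) be a fundamental matrix of Φ' + p·Φ = 0 on [a,c] with D = A·Γ(a) + C·Γ(c) nonsingular. Then for every continuous f : [a,c] → ℝⁿ and every γ ∈ ℝⁿ, the boundary value problem Φ'(x) + p(x)·Φ(x) = f(x), A·Φ(a) + C·Φ(c) = γ has a unique C¹ solution. -/
/-! Variation of parameters. If `G` is a primitive of `Γ⁻¹ f`, then `Φ = Γ (w + G)` solves
`Φ' + p Φ = f` for every constant `w`, and the boundary condition becomes the linear system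
`D w = γ - C Γ(c) G(c)`. Conversely, the difference `Δ` of two solutions solves the homogeneous
equation, so `Γ⁻¹ Δ` has derivative zero; hence `Δ = Γ u₀` with `D u₀ = 0`, i.e. `u₀ = 0`. -/

open Matrix Set

theorem exists_hasDerivAt_of_continuousOn_Icc {E : Type*} [NormedAddCommGroup E]
    [NormedSpace ℝ E] [CompleteSpace E] {g : ℝ → E} {a b : ℝ} (hab : a ≤ b)
    (hg : ContinuousOn g (Icc a b)) :
    ∃ G : ℝ → E, G a = 0 ∧ ∀ x ∈ Icc a b, HasDerivAt G (g x) x := by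
  -- Extending `g` constantly outside `[a, b]` gives two-sided derivatives at the endpoints.
  have hext : Continuous (IccExtend hab ((Icc a b).domRestrict g)) :=
    (continuousOn_iff_continuous_domRestrict.1 hg).Icc_extend'
  refine ⟨fun x => ∫ t in a..x, IccExtend hab ((Icc a b).domRestrict g) t,
    intervalIntegral.integral_same, fun x hx => ?_⟩
  have := (hext.integral_hasStrictDerivAt a x).hasDerivAt
  rwa [IccExtend_of_mem hab _ hx] at this

section MatrixCalculus

variable {𝕜 : Type*} [NontriviallyNormedField 𝕜] {m n : Type*}

theorem hasDerivAt_matrix_iff [Fintype m] [Fintype n] {F : Type*} [NormedAddCommGroup F]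
    [NormedSpace 𝕜 F] {Γ : 𝕜 → Matrix m n F} {Γ' : Matrix m n F} {x : 𝕜} :
    HasDerivAt Γ Γ' x ↔ ∀ i j, HasDerivAt (fun y => Γ y i j) (Γ' i j) x :=
  hasDerivAt_pi.trans (forall_congr' fun _ => hasDerivAt_pi)

theorem HasDerivAt.matrix_mulVec [Fintype m] [Fintype n] {Γ : 𝕜 → Matrix m n 𝕜}
    {Γ' : Matrix m n 𝕜} {u : 𝕜 → n → 𝕜} {u' : n → 𝕜} {x : 𝕜} (hΓ : HasDerivAt Γ Γ' x)
    (hu : HasDerivAt u u' x) :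
    HasDerivAt (fun y => Γ y *ᵥ u y) (Γ' *ᵥ u x + Γ x *ᵥ u') x := by
  refine hasDerivAt_pi.2 fun i => ?_
  simpa [mulVec, dotProduct, Finset.sum_add_distrib] using
    HasDerivAt.fun_sum fun j _ =>
      (hasDerivAt_matrix_iff.1 hΓ i j).mul (hasDerivAt_pi.1 hu j)

end MatrixCalculus

-- `HasDerivAt` on matrices only sees their topology, so the operator norm can be borrowed to
-- differentiate the inverse as `Ring.inverse` in a complete normed ring.
open scoped Matrix.Norms.Operator in
theorem HasDerivAt.matrix_inv {𝕜 : Type*} [RCLike 𝕜] {m : Type*} [Fintype m] [DecidableEq m]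
    {Γ : 𝕜 → Matrix m m 𝕜} {Γ' : Matrix m m 𝕜} {x : 𝕜} (hΓ : HasDerivAt Γ Γ' x)
    (hdet : IsUnit (Γ x).det) :
    HasDerivAt (fun y => (Γ y)⁻¹) (-((Γ x)⁻¹ * Γ' * (Γ x)⁻¹)) x := by
  obtain ⟨u, hu⟩ := (isUnit_iff_isUnit_det (Γ x)).2 hdet
  simp only [nonsing_inv_eq_ringInverse, ← hu, Ring.inverse_unit]
  have hinv := hasFDerivAt_ringInverse (𝕜 := 𝕜) u
  rw [hu] at hinv
  exact hinv.comp_hasDerivAt x hΓ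

section FundamentalMatrix

variable {m : Type*} [Fintype m] {p Γ : ℝ → Matrix m m ℝ}

theorem hasDerivAt_fundamental_mulVec {u : ℝ → m → ℝ} {u' : m → ℝ} {x : ℝ}
    (hΓ : HasDerivAt Γ (-(p x * Γ x)) x) (hu : HasDerivAt u u' x) :
    HasDerivAt (fun y => Γ y *ᵥ u y) (Γ x *ᵥ u' - p x *ᵥ (Γ x *ᵥ u x)) x :=
  (hΓ.matrix_mulVec hu).congr_deriv (by rw [neg_mulVec, ← mulVec_mulVec]; abel)

theorem hasDerivAt_inv_fundamental_mulVec [DecidableEq m] {Δ : ℝ → m → ℝ} {x : ℝ}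
    (hΓ : HasDerivAt Γ (-(p x * Γ x)) x) (hdet : IsUnit (Γ x).det)
    (hΔ : HasDerivAt Δ (-(p x *ᵥ Δ x)) x) :
    HasDerivAt (fun y => (Γ y)⁻¹ *ᵥ Δ y) 0 x := by
  convert (hΓ.matrix_inv hdet).matrix_mulVec hΔ using 1
  rw [mul_neg, neg_mul, neg_neg, Matrix.mul_assoc, Matrix.mul_assoc, mul_nonsing_inv _ hdet,
    Matrix.mul_one, mulVec_neg, ← mulVec_mulVec, add_neg_cancel]

variable {a c : ℝ}

theorem eq_fundamental_mulVec_of_hasDerivAt [DecidableEq m] {Δ : ℝ → m → ℝ}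
    (hΓ : ∀ x ∈ Icc a c, HasDerivAt Γ (-(p x * Γ x)) x)
    (hdet : ∀ x ∈ Icc a c, IsUnit (Γ x).det)
    (hΔ : ∀ x ∈ Icc a c, HasDerivAt Δ (-(p x *ᵥ Δ x)) x) :
    ∀ x ∈ Icc a c, Δ x = Γ x *ᵥ ((Γ a)⁻¹ *ᵥ Δ a) := by
  have hu x (hx : x ∈ Icc a c) :=
    hasDerivAt_inv_fundamental_mulVec (hΓ x hx) (hdet x hx) (hΔ x hx)
  have hconst := constant_of_has_deriv_right_zero
    (fun x hx => (hu x hx).continuousAt.continuousWithinAt)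
    (fun x hx => (hu x (Ico_subset_Icc_self hx)).hasDerivWithinAt)
  intro x hx
  rw [← hconst x hx, mulVec_mulVec, mul_nonsing_inv _ (hdet x hx), one_mulVec]

theorem bvp_solution_exists [DecidableEq m] (hac : a ≤ c)
    (hΓ : ∀ x ∈ Icc a c, HasDerivAt Γ (-(p x * Γ x)) x)
    (hdet : ∀ x ∈ Icc a c, IsUnit (Γ x).det) {A C : Matrix m m ℝ}
    (hD : IsUnit (A * Γ a + C * Γ c).det) {f : ℝ → m → ℝ} (hf : ContinuousOn f (Icc a c))
    (γ : m → ℝ) :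
    ∃ Φ : ℝ → m → ℝ,
      (∀ x ∈ Icc a c, HasDerivAt Φ (f x - p x *ᵥ Φ x) x) ∧ A *ᵥ Φ a + C *ᵥ Φ c = γ := by
  have hinv : ContinuousOn (fun x => (Γ x)⁻¹) (Icc a c) := fun x hx =>
    have hΓinv := hasDerivAt_matrix_iff.1 ((hΓ x hx).matrix_inv (hdet x hx))
    continuousWithinAt_pi.2 fun i => continuousWithinAt_pi.2 fun j =>
      (hΓinv i j).continuousAt.continuousWithinAt
  obtain ⟨G, hGa, hG⟩ : ∃ G : ℝ → m → ℝ, G a = 0 ∧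
      ∀ x ∈ Icc a c, HasDerivAt G ((Γ x)⁻¹ *ᵥ f x) x := exists_hasDerivAt_of_continuousOn_Icc hac
    ((continuous_fst.matrix_mulVec continuous_snd).comp_continuousOn (hinv.prodMk hf))
  obtain ⟨w, hw⟩ := mulVec_surjective_iff_isUnit.2 ((isUnit_iff_isUnit_det _).2 hD)
    (γ - C *ᵥ (Γ c *ᵥ G c))
  refine ⟨fun x => Γ x *ᵥ (w + G x), fun x hx => ?_, ?_⟩
  · convert hasDerivAt_fundamental_mulVec (hΓ x hx) ((hG x hx).const_add w) using 1
    rw [mulVec_mulVec (f x), mul_nonsing_inv _ (hdet x hx), one_mulVec]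
  · beta_reduce
    rw [hGa, add_zero, mulVec_add, mulVec_add, ← add_assoc, mulVec_mulVec, mulVec_mulVec,
      ← add_mulVec, hw, mulVec_mulVec, sub_add_cancel]

theorem bvp_solution_unique [DecidableEq m] (hac : a ≤ c)
    (hΓ : ∀ x ∈ Icc a c, HasDerivAt Γ (-(p x * Γ x)) x)
    (hdet : ∀ x ∈ Icc a c, IsUnit (Γ x).det) {A C : Matrix m m ℝ}
    (hD : IsUnit (A * Γ a + C * Γ c).det) {f : ℝ → m → ℝ} {Φ Ψ : ℝ → m → ℝ}
    (hΦ : ∀ x ∈ Icc a c, HasDerivAt Φ (f x - p x *ᵥ Φ x) x)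
    (hΨ : ∀ x ∈ Icc a c, HasDerivAt Ψ (f x - p x *ᵥ Ψ x) x)
    (hbc : A *ᵥ Ψ a + C *ᵥ Ψ c = A *ᵥ Φ a + C *ᵥ Φ c) :
    EqOn Ψ Φ (Icc a c) := by
  have hΔ := eq_fundamental_mulVec_of_hasDerivAt hΓ hdet (Δ := fun y => Ψ y - Φ y) fun x hx =>
    ((hΨ x hx).sub (hΦ x hx)).congr_deriv (by rw [mulVec_sub]; abel)
  set u₀ := (Γ a)⁻¹ *ᵥ (Ψ a - Φ a)
  have hu₀ : u₀ = 0 := by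
    refine mulVec_injective_iff_isUnit.2 ((isUnit_iff_isUnit_det _).2 hD) ?_
    rw [mulVec_zero, add_mulVec, ← mulVec_mulVec, ← mulVec_mulVec,
      ← hΔ a (left_mem_Icc.2 hac), ← hΔ c (right_mem_Icc.2 hac), mulVec_sub, mulVec_sub,
      sub_add_sub_comm, hbc, sub_self]
  intro x hx
  rw [← sub_eq_zero, hΔ x hx, hu₀, mulVec_zero]

end FundamentalMatrix

theorem bvp_exists_unique_solution_general
    {n : ℕ} {a c : ℝ} (hac : a < c)
    (p : ℝ → Matrix (Fin n) (Fin n) ℝ)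
    (A C : Matrix (Fin n) (Fin n) ℝ)
    (Γ : ℝ → Matrix (Fin n) (Fin n) ℝ)
    (hΓinv : ∀ x ∈ Icc a c, IsUnit (Γ x).det)
    (hΓode : ∀ x ∈ Icc a c, ∀ i j,
      HasDerivAt (fun y => Γ y i j) (-(p x * Γ x) i j) x)
    (hD : IsUnit (A * Γ a + C * Γ c).det) :
    ∀ f : ℝ → Fin n → ℝ, ContinuousOn f (Icc a c) →
    ∀ γ : Fin n → ℝ,
      ∃ Φ : ℝ → Fin n → ℝ,
        ((∀ x ∈ Icc a c, HasDerivAt Φ (f x - p x *ᵥ Φ x) x) ∧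
          A *ᵥ Φ a + C *ᵥ Φ c = γ) ∧
        ∀ Ψ : ℝ → Fin n → ℝ,
          (∀ x ∈ Icc a c, HasDerivAt Ψ (f x - p x *ᵥ Ψ x) x) →
          A *ᵥ Ψ a + C *ᵥ Ψ c = γ →
          ∀ x ∈ Icc a c, Ψ x = Φ x := by
  intro f hf γ
  have hΓ : ∀ x ∈ Icc a c, HasDerivAt Γ (-(p x * Γ x)) x := fun x hx =>
    hasDerivAt_matrix_iff.2 (hΓode x hx)
  obtain ⟨Φ, hΦ, hΦbc⟩ := bvp_solution_exists hac.le hΓ hΓinv hD hf γ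
  exact ⟨Φ, ⟨hΦ, hΦbc⟩, fun Ψ hΨ hΨbc =>
    bvp_solution_unique hac.le hΓ hΓinv hD hΦ hΨ (hΨbc.trans hΦbc.symm)⟩

/-- If `Γ` is a fundamental matrix of `Φ' + p·Φ = 0` on `[a,c]` with
`D = A·Γ(a) + C·Γ(c)` nonsingular, then for every continuous `f` and every `γ`,
the boundary value problem `Φ' + p·Φ = f`, `A·Φ(a) + C·Φ(c) = γ` has a unique C¹ solution. -/
theorem bvp_exists_unique_solution
    {n : ℕ} {a c : ℝ} (hac : a < c)
    (p : ℝ → Matrix (Fin n) (Fin n) ℝ)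
    (hp : ∀ i j, ContinuousOn (fun x => p x i j) (Icc a c))
    (A C : Matrix (Fin n) (Fin n) ℝ)
    (Γ : ℝ → Matrix (Fin n) (Fin n) ℝ)
    (hΓinv : ∀ x ∈ Icc a c, IsUnit (Γ x).det)
    (hΓode : ∀ x ∈ Icc a c, ∀ i j,
      HasDerivAt (fun y => Γ y i j) (-(p x * Γ x) i j) x)
    (hD : IsUnit (A * Γ a + C * Γ c).det) :
    ∀ f : ℝ → Fin n → ℝ, ContinuousOn f (Icc a c) →
    ∀ γ : Fin n → ℝ,
      ∃ Φ : ℝ → Fin n → ℝ,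
        ((∀ x ∈ Icc a c, HasDerivAt Φ (f x - p x *ᵥ Φ x) x) ∧
          A *ᵥ Φ a + C *ᵥ Φ c = γ) ∧
        ∀ Ψ : ℝ → Fin n → ℝ,
          (∀ x ∈ Icc a c, HasDerivAt Ψ (f x - p x *ᵥ Ψ x) x) →
          A *ᵥ Ψ a + C *ᵥ Ψ c = γ →
          ∀ x ∈ Icc a c, Ψ x = Φ x :=
  bvp_exists_unique_solution_general hac p A C Γ hΓinv hΓode hD
end

section
/- Let A, C ∈ ℝ^{n×n}. There exists a C¹ map T : [a,c] → ℝ^{n×n} with T(x) invertible for all x ∈ [a,c] and det(A·T(a) + C·T(c)) ≠ 0 if and only if ker(Aᵀ) ∩ ker(Cᵀ) = {0}. -/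
open Matrix Set Filter Topology

/-!
A common left null vector of `A` and `C` is a left null vector of `A * P + C * Q` for all `P`, `Q`.
Conversely, if there is none, the block matrix `[A C]` has a right inverse, i.e. `A X + C Y = 1`.
For `ε` avoiding the finitely many roots of `det (ε - X)` and `det (ε A - 1)`, the matrix
`M = -Y (ε - X)⁻¹` makes `A + C M = (ε A - 1) (ε - X)⁻¹` invertible. The polynomial
`t ↦ det (A + C (1 + t (M - 1)))` is then nonzero at `t = 1`, hence at every small `t ≠ 0`, and for
such a `t` the affine path from `1` to `1 + t (M - 1)` stays invertible and serves as `T`.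
-/

namespace Matrix

variable {m n n₁ n₂ R K : Type*}

theorem ker_transpose_inf_ker_transpose_eq_bot_of_det_ne_zero [Fintype m] [DecidableEq m]
    [Fintype n₁] [Fintype n₂] [CommRing R] [NoZeroDivisors R] {A : Matrix m n₁ R}
    {C : Matrix m n₂ R} {P : Matrix n₁ m R} {Q : Matrix n₂ m R} (h : (A * P + C * Q).det ≠ 0) :
    LinearMap.ker Aᵀ.mulVecLin ⊓ LinearMap.ker Cᵀ.mulVecLin = ⊥ := by
  rw [eq_bot_iff]
  intro v hv
  simp only [Submodule.mem_inf, LinearMap.mem_ker, mulVecLin_apply, mulVec_transpose] at hv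
  rw [Submodule.mem_bot]
  refine eq_zero_of_vecMul_eq_zero h ?_
  rw [vecMul_add, ← vecMul_vecMul, ← vecMul_vecMul, hv.1, hv.2, zero_vecMul, zero_vecMul, add_zero]

theorem ker_mulVecLin_transpose_fromCols [CommRing R] [Fintype m] (A : Matrix m n₁ R)
    (C : Matrix m n₂ R) :
    LinearMap.ker (fromCols A C)ᵀ.mulVecLin
      = LinearMap.ker Aᵀ.mulVecLin ⊓ LinearMap.ker Cᵀ.mulVecLin := by
  ext v
  simp only [transpose_fromCols, fromRows_mulVec, Submodule.mem_inf, LinearMap.mem_ker,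
    mulVecLin_apply]
  rw [← Sum.elim_zero_zero, Sum.elim_eq_iff]

theorem mulVec_surjective_of_ker_mulVecLin_transpose_eq_bot [Field K] [Fintype m] [Fintype n]
    {B : Matrix m n K} (h : LinearMap.ker Bᵀ.mulVecLin = ⊥) : Function.Surjective B.mulVec := by
  have hrank : B.rank = Fintype.card m := by
    rw [← rank_transpose, rank, LinearMap.finrank_range_of_inj (LinearMap.ker_eq_bot.1 h),
      Module.finrank_fintype_fun_eq_card]
  have hrange : LinearMap.range B.mulVecLin = ⊤ :=
    Submodule.eq_top_of_finrank_eq (by rw [← rank, hrank, Module.finrank_fintype_fun_eq_card])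
  exact LinearMap.range_eq_top.1 hrange

theorem exists_mul_add_mul_eq_one [Field K] [Fintype m] [DecidableEq m] [Fintype n₁] [Fintype n₂]
    {A : Matrix m n₁ K} {C : Matrix m n₂ K}
    (h : LinearMap.ker Aᵀ.mulVecLin ⊓ LinearMap.ker Cᵀ.mulVecLin = ⊥) :
    ∃ (X : Matrix n₁ m K) (Y : Matrix n₂ m K), A * X + C * Y = 1 := by
  obtain ⟨R, hR⟩ := mulVec_surjective_iff_exists_right_inverse.1
    (mulVec_surjective_of_ker_mulVecLin_transpose_eq_bot
      ((ker_mulVecLin_transpose_fromCols A C).trans h))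
  exact ⟨R.toRows₁, R.toRows₂, by rwa [← fromCols_mul_fromRows, fromRows_toRows]⟩

open Polynomial in
theorem eventually_cofinite_det_add_smul_ne_zero [Fintype n] [DecidableEq n] [CommRing R]
    [IsDomain R] {U V : Matrix n n R} {t₁ : R} (h : (U + t₁ • V).det ≠ 0) :
    ∀ᶠ t : R in cofinite, (U + t • V).det ≠ 0 := by
  set p : R[X] := (U.map C + (X : R[X]) • V.map C).det
  have hp : ∀ t, p.eval t = (U + t • V).det := fun t => by
    rw [← coe_evalRingHom, RingHom.map_det]
    congr 1
    ext i j
    simp only [RingHom.mapMatrix_apply, map_apply, add_apply, smul_apply, smul_eq_mul,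
      coe_evalRingHom, eval_add, eval_mul, eval_X, eval_C]
  have hp0 : p ≠ 0 := fun h0 => h (by rw [← hp, h0, eval_zero])
  filter_upwards [(finite_setOfPred_isRoot hp0).eventually_cofinite_notMem] with t ht
  rwa [← hp]

theorem exists_det_add_mul_ne_zero [Fintype n] [DecidableEq n] [Field K] [Infinite K]
    {A C X Y : Matrix n n K} (h : A * X + C * Y = 1) : ∃ M, (A + C * M).det ≠ 0 := by
  have hP : ∀ᶠ ε : K in cofinite, (scalar n ε - X).det ≠ 0 := by
    filter_upwards
      [(Polynomial.finite_setOfPred_isRoot (charpoly_monic X).ne_zero).eventually_cofinite_notMem]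
      with ε hε
    rwa [← eval_charpoly]
  have hQ : ∀ᶠ ε : K in cofinite, (-1 + ε • A).det ≠ 0 :=
    eventually_cofinite_det_add_smul_ne_zero (U := -1) (V := A) (t₁ := 0) (by simp [det_neg])
  obtain ⟨ε, hPε, hQε⟩ := (hP.and hQ).exists
  set P := scalar n ε - X
  have hPu : IsUnit P.det := isUnit_iff_ne_zero.2 hPε
  have hAP : A * P - C * Y = -1 + ε • A := by
    rw [← h]
    simp only [P, Matrix.mul_sub, scalar_apply, ← smul_one_eq_diagonal, Matrix.mul_smul,
      Matrix.mul_one]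
    abel
  refine ⟨-(Y * P⁻¹), ?_⟩
  have hfac : A + C * -(Y * P⁻¹) = (-1 + ε • A) * P⁻¹ := by
    rw [← hAP, Matrix.sub_mul, mul_nonsing_inv_cancel_right _ _ hPu, Matrix.mul_neg,
      Matrix.mul_assoc, sub_eq_add_neg]
  rw [hfac, det_mul]
  exact mul_ne_zero hQε (isUnit_nonsing_inv_det _ hPu).ne_zero

theorem eventually_forall_Icc_det_one_add_smul_ne_zero [Fintype n] [DecidableEq n]
    (V : Matrix n n ℝ) :
    ∀ᶠ t in 𝓝 0, ∀ s ∈ Icc (0 : ℝ) 1, (1 + (s * t) • V).det ≠ 0 := by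
  have hcont : Continuous fun u : ℝ => (1 + u • V).det := by fun_prop
  obtain ⟨δ, hδ, hne⟩ := Metric.eventually_nhds_iff.1
    (hcont.continuousAt.eventually_ne (x := 0) (y := 0) (by simp))
  filter_upwards [Metric.ball_mem_nhds 0 hδ] with t ht s hs
  refine hne ?_
  rw [Metric.mem_ball, Real.dist_eq, sub_zero] at ht
  rw [Real.dist_eq, sub_zero, abs_mul, abs_of_nonneg hs.1]
  exact (mul_le_of_le_one_left (abs_nonneg t) hs.2).trans_lt ht

end Matrix

/-- There exists a C¹ map `T : [a,c] → ℝ^{n×n}` with `T(x)` invertible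
for all `x ∈ [a,c]` and `det(A·T(a) + C·T(c)) ≠ 0` iff `ker(Aᵀ) ∩ ker(Cᵀ) = {0}`. -/
theorem exists_transform_iff_ker_inter_trivial
    {n : ℕ} {a c : ℝ} (hac : a < c)
    (A C : Matrix (Fin n) (Fin n) ℝ) :
    (∃ T : ℝ → Matrix (Fin n) (Fin n) ℝ,
        (∀ i j, ContDiffOn ℝ 1 (fun x => T x i j) (Icc a c)) ∧
        (∀ x ∈ Icc a c, IsUnit (T x).det) ∧
        (A * T a + C * T c).det ≠ 0)
      ↔ LinearMap.ker Aᵀ.mulVecLin ⊓ LinearMap.ker Cᵀ.mulVecLin = ⊥ := by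
  refine ⟨fun ⟨_, _, _, hT⟩ => ker_transpose_inf_ker_transpose_eq_bot_of_det_ne_zero hT,
    fun h => ?_⟩
  obtain ⟨X, Y, hXY⟩ := exists_mul_add_mul_eq_one h
  obtain ⟨M, hM⟩ := exists_det_add_mul_ne_zero hXY
  have hend : ∀ᶠ t : ℝ in 𝓝[≠] 0, (A + C + t • (C * (M - 1))).det ≠ 0 :=
    nhdsNE_le_cofinite 0 <| eventually_cofinite_det_add_smul_ne_zero (t₁ := 1) <| by
      rwa [one_smul, Matrix.mul_sub, Matrix.mul_one, add_add_sub_cancel]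
  obtain ⟨t, hpath, hendt⟩ :=
    (((eventually_forall_Icc_det_one_add_smul_ne_zero (M - 1)).filter_mono
      nhdsWithin_le_nhds).and hend).exists
  have hca : c - a ≠ 0 := sub_ne_zero.2 hac.ne'
  refine ⟨fun x => 1 + ((x - a) / (c - a) * t) • (M - 1),
    fun i j => by simp only [Matrix.add_apply, Matrix.smul_apply, smul_eq_mul]; fun_prop,
    fun x hx => isUnit_iff_ne_zero.2 (hpath _ ⟨?_, ?_⟩), ?_⟩
  · exact div_nonneg (sub_nonneg.2 hx.1) (sub_nonneg.2 hac.le)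
  · exact (div_le_one (sub_pos.2 hac)).2 (sub_le_sub_right hx.2 a)
  · simpa [div_self hca, Matrix.mul_add, Matrix.mul_smul, add_assoc] using hendt
end

section
/- Suppose the columns a_{i₁},…,a_{i_r} of A together with columns c_{j₁},…,c_{j_{n−r}} of C form a basis of ℝⁿ, and let σ ∈ S_n be a permutation with {σ(j₁),…,σ(j_{n−r})} ∪ {i₁,…,i_r} = {1,…,n}. Then there exists λ > 0 such that the matrix A + C·P_σ·Λ is nonsingular, where P_σ is the permutation matrix of σ and Λ is the diagonal matrix with Λ_{kk} = λ if k = σ(j_l) for some l, and Λ_{kk} = 1/λ if k = i_l for some l. -/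
open Matrix Set

open Classical in
/-- If the columns `a_{i₁},…,a_{i_r}` of `A` together with the columns
`c_{j₁},…,c_{j_{n−r}}` of `C` form a basis of `ℝⁿ`, and `σ ∈ S_n` is a permutation with
`{σ(j₁),…,σ(j_{n−r})} ∪ {i₁,…,i_r} = {1,…,n}`, then there is `λ > 0` such that
`A + C·P_σ·Λ` is nonsingular, where `Λ` is diagonal with `Λ_{kk} = λ` if `k = σ(j_l)` and
`Λ_{kk} = 1/λ` if `k = i_l`. -/
theorem exists_lambda_nonsingular_perm_diagonal
    {n r : ℕ} (hr : r ≤ n)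
    (A C : Matrix (Fin n) (Fin n) ℝ)
    (i : Fin r → Fin n) (j : Fin (n - r) → Fin n)
    -- the chosen columns of `A` and `C` form a basis of `ℝⁿ`
    (hindep : LinearIndependent ℝ
      (Sum.elim (fun l => Aᵀ (i l)) (fun l => Cᵀ (j l)) : Fin r ⊕ Fin (n - r) → Fin n → ℝ))
    (hspan : Submodule.span ℝ
      (Set.range (Sum.elim (fun l => Aᵀ (i l)) (fun l => Cᵀ (j l)) :
        Fin r ⊕ Fin (n - r) → Fin n → ℝ)) = ⊤)
    (σ : Equiv.Perm (Fin n))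
    (hσ : (Set.range fun l => σ (j l)) ∪ Set.range i = Set.univ) :
    ∃ lam : ℝ, 0 < lam ∧
      (A + C * σ.permMatrix ℝ *
        Matrix.diagonal (fun k =>
          if k ∈ Set.range fun l => σ (j l) then lam else lam⁻¹)).det ≠ 0 := by
  classical
  set S : Set (Fin n) := Set.range fun l => σ (j l) with hS
  set B : Matrix (Fin n) (Fin n) ℝ := C * σ.permMatrix ℝ with hB
  set f : ℝ → ℝ := fun t =>
    (A * Matrix.diagonal (fun k => if k ∈ S then t else 1)
      + B * Matrix.diagonal (fun k => if k ∈ S then 1 else t)).det with hf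
  -- continuity of `f`
  have hfcont : Continuous f := by
    have h1 : Continuous fun t : ℝ => (fun k => if k ∈ S then t else 1 : Fin n → ℝ) := by
      apply continuous_pi
      intro k
      by_cases h : k ∈ S <;> simp [h] <;> fun_prop
    have h2 : Continuous fun t : ℝ => (fun k => if k ∈ S then 1 else t : Fin n → ℝ) := by
      apply continuous_pi
      intro k
      by_cases h : k ∈ S <;> simp [h] <;> fun_prop
    exact ((continuous_const.matrix_mul h1.matrix_diagonal).add
      (continuous_const.matrix_mul h2.matrix_diagonal)).matrix_det
  -- the index equivalence
  have hcard : Fintype.card (Fin r ⊕ Fin (n - r)) = Fintype.card (Fin n) := by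
    simp [Nat.add_sub_cancel' hr]
  set e : Fin r ⊕ Fin (n - r) → Fin n := Sum.elim i (fun l => σ (j l)) with he
  have hsurj : Function.Surjective e := by
    rw [← Set.range_eq_univ, he, Sum.elim_range, Set.union_comm]
    exact hσ
  have hbij : Function.Bijective e :=
    (Fintype.bijective_iff_surjective_and_card e).2 ⟨hsurj, hcard⟩
  set eE : (Fin r ⊕ Fin (n - r)) ≃ Fin n := Equiv.ofBijective e hbij with heE
  -- the entries of `B`
  have hBC : ∀ m k, B m k = C m (σ.symm k) := by
    intro m k
    rw [hB, Equiv.Perm.permMatrix, PEquiv.mul_toMatrix_toPEquiv]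
    rfl
  -- the columns of the matrix at `t = 0` are the given basis, reindexed by `eE`
  have hcol : ∀ k : Fin n,
      (A * Matrix.diagonal (fun k => if k ∈ S then (0:ℝ) else 1)
        + B * Matrix.diagonal (fun k => if k ∈ S then (1:ℝ) else 0))ᵀ k
      = Sum.elim (fun l => Aᵀ (i l)) (fun l => Cᵀ (j l)) (eE.symm k) := by
    intro k
    have hk : e (eE.symm k) = k := eE.apply_symm_apply k
    funext m
    rcases hsym : eE.symm k with l | l
    · -- here `k = i l` and `k ∉ S`
      rw [hsym] at hk
      have hkS : k ∉ S := by
        rintro ⟨l', hl'⟩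
        have : eE.symm k = Sum.inr l' := eE.symm_apply_eq.mpr hl'.symm
        rw [this] at hsym
        exact Sum.inr_ne_inl hsym
      have hik : i l = k := hk
      simp [Matrix.add_apply, Matrix.mul_diagonal, hkS, hik]
    · -- here `k = σ (j l)`, so `k ∈ S`
      rw [hsym] at hk
      have hkS : k ∈ S := ⟨l, hk⟩
      have hjk : σ.symm k = j l := by
        rw [← hk]; exact σ.symm_apply_apply (j l)
      simp [Matrix.add_apply, Matrix.mul_diagonal, hkS, hBC, hjk]
  -- `f 0 ≠ 0`
  have hf0 : f 0 ≠ 0 := by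
    have hli : LinearIndependent ℝ
        (fun k => (A * Matrix.diagonal (fun k => if k ∈ S then (0:ℝ) else 1)
          + B * Matrix.diagonal (fun k => if k ∈ S then (1:ℝ) else 0))ᵀ k) := by
      have := hindep.comp eE.symm eE.symm.injective
      convert this using 1
      funext k
      exact hcol k
    have hu := Matrix.linearIndependent_cols_iff_isUnit.mp hli
    have := (Matrix.isUnit_iff_isUnit_det _).mp hu
    exact isUnit_iff_ne_zero.mp this
  -- pick a small positive `t` with `f t ≠ 0`
  have hev : ∀ᶠ t in nhdsWithin (0:ℝ) (Set.Ioi 0), f t ≠ 0 ∧ t ∈ Set.Ioi (0:ℝ) :=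
    ((hfcont.continuousAt.eventually_ne hf0).filter_mono nhdsWithin_le_nhds).and
      self_mem_nhdsWithin
  obtain ⟨t, hft, ht⟩ := hev.exists
  have ht0 : (0:ℝ) < t := ht
  refine ⟨t⁻¹, inv_pos.mpr ht0, ?_⟩
  -- relate the target determinant to `f t`
  set M : Matrix (Fin n) (Fin n) ℝ :=
    A + B * Matrix.diagonal (fun k => if k ∈ S then t⁻¹ else t⁻¹⁻¹) with hM
  have key : M * Matrix.diagonal (fun k => if k ∈ S then t else 1)
      = A * Matrix.diagonal (fun k => if k ∈ S then t else 1)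
        + B * Matrix.diagonal (fun k => if k ∈ S then 1 else t) := by
    have hfun : (fun k => (if k ∈ S then t⁻¹ else t⁻¹⁻¹) * (if k ∈ S then t else 1))
        = fun k => if k ∈ S then (1:ℝ) else t := by
      funext k
      by_cases h : k ∈ S <;> simp [h, inv_inv, inv_mul_cancel₀ (ne_of_gt ht0)]
    rw [hM, Matrix.add_mul, Matrix.mul_assoc, Matrix.diagonal_mul_diagonal, hfun]
  have hdet : M.det * (Matrix.diagonal (fun k => if k ∈ S then t else 1)).det = f t := by
    rw [← Matrix.det_mul, key]
  exact left_ne_zero_of_mul (hdet ▸ hft)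
end
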